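/- arXiv:2003.09055 — 4 statements merged into one kernel-verified Lean document; each statement's English description precedes it below -/
import Mathlib

section
/- Let γₙ → γ in the metric space (C_f, ψ) of finite parameterized curves in ℝ³, and let 0 ≤ a < b < T(γ). Then for all sufficiently large n, the restriction γₙ|_{[a,b]} is defined, and the restrictions γₙ|_{[a,b]} converge to γ|_{[a,b]} in (C_f, ψ), where the restriction of a curve γ to [a,b] is the curve t ↦ γ(t+a) of duration b−a. -/
open Filter Set

noncomputable section

/-- A finite-duration parameterized curve in `ℝ³`: a continuous function together with
its duration `T ≥ 0` (only the values on `[0, T]` are relevant). -/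
structure FiniteCurve where
  T : ℝ
  hT : 0 ≤ T
  toFun : ℝ → EuclideanSpace ℝ (Fin 3)
  cont : Continuous toFun

/-- The metric `ψ` on the space `C_f` of finite parameterized curves:
`ψ(γ₁,γ₂) = |T₁ − T₂| + max_{0 ≤ s ≤ 1} |γ₁(sT₁) − γ₂(sT₂)|`. -/
noncomputable def psiDist (γ₁ γ₂ : FiniteCurve) : ℝ :=
  |γ₁.T - γ₂.T| +
    ⨆ s : Set.Icc (0 : ℝ) 1, dist (γ₁.toFun ((s : ℝ) * γ₁.T)) (γ₂.toFun ((s : ℝ) * γ₂.T))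

/-- The restriction of a curve `γ` to `[a,b]`: the curve `t ↦ γ(t + a)` of duration `b − a`. -/
noncomputable def FiniteCurve.restrictTo (γ : FiniteCurve) (a b : ℝ) (hab : a ≤ b) :
    FiniteCurve where
  T := b - a
  hT := by linarith
  toFun := fun t => γ.toFun (t + a)
  cont := γ.cont.comp (continuous_id.add continuous_const)

open Topology

lemma abs_T_sub_le_psiDist (γ₁ γ₂ : FiniteCurve) : |γ₁.T - γ₂.T| ≤ psiDist γ₁ γ₂ :=
  le_add_of_nonneg_right (Real.iSup_nonneg fun _ => dist_nonneg)

lemma psiDist_nonneg (γ₁ γ₂ : FiniteCurve) : 0 ≤ psiDist γ₁ γ₂ :=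
  (abs_nonneg _).trans (abs_T_sub_le_psiDist γ₁ γ₂)

lemma dist_le_psiDist (γ₁ γ₂ : FiniteCurve) {s : ℝ} (hs : s ∈ Icc (0 : ℝ) 1) :
    dist (γ₁.toFun (s * γ₁.T)) (γ₂.toFun (s * γ₂.T)) ≤ psiDist γ₁ γ₂ := by
  have hcont : Continuous fun s : Icc (0 : ℝ) 1 =>
      dist (γ₁.toFun ((s : ℝ) * γ₁.T)) (γ₂.toFun ((s : ℝ) * γ₂.T)) := by
    have := γ₁.cont; have := γ₂.cont; fun_prop
  calc dist (γ₁.toFun (s * γ₁.T)) (γ₂.toFun (s * γ₂.T))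
      ≤ ⨆ s : Icc (0 : ℝ) 1, dist (γ₁.toFun ((s : ℝ) * γ₁.T)) (γ₂.toFun ((s : ℝ) * γ₂.T)) :=
        le_ciSup (isCompact_range hcont).bddAbove ⟨s, hs⟩
    _ ≤ psiDist γ₁ γ₂ := le_add_of_nonneg_left (abs_nonneg _)

lemma psiDist_restrictTo_le {γ₁ γ₂ : FiniteCurve} {a b ε : ℝ} (hab : a ≤ b) (hε : 0 ≤ ε)
    (h : ∀ t ∈ Icc a b, dist (γ₁.toFun t) (γ₂.toFun t) ≤ ε) :
    psiDist (γ₁.restrictTo a b hab) (γ₂.restrictTo a b hab) ≤ ε := by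
  simp only [psiDist, FiniteCurve.restrictTo, sub_self, abs_zero, zero_add]
  refine Real.iSup_le (fun ⟨s, hs0, hs1⟩ => h _ ⟨?_, ?_⟩) hε <;> nlinarith

section Convergence

variable {ι : Type*} {l : Filter ι} {γs : ι → FiniteCurve} {γ : FiniteCurve}

lemma tendsto_T_of_tendsto_psiDist (h : Tendsto (fun i => psiDist (γs i) γ) l (𝓝 0)) :
    Tendsto (fun i => (γs i).T) l (𝓝 γ.T) := by
  rw [tendsto_iff_dist_tendsto_zero]
  exact squeeze_zero (fun _ => dist_nonneg) (fun i => abs_T_sub_le_psiDist (γs i) γ) h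

/-- A point `t ≤ b < T(γ)` is compared with `γ` at the time `(t / Tᵢ) T(γ)`, which differs
from `t` by at most `|Tᵢ − T(γ)|`; uniform continuity of `γ` on `[0, T(γ)]` closes the gap. -/
lemma tendstoUniformlyOn_of_tendsto_psiDist {b : ℝ} (hb : b < γ.T)
    (h : Tendsto (fun i => psiDist (γs i) γ) l (𝓝 0)) :
    TendstoUniformlyOn (fun i => (γs i).toFun) γ.toFun l (Icc 0 b) := by
  rw [Metric.tendstoUniformlyOn_iff]
  intro ε hε
  obtain ⟨δ, hδ, hγ⟩ := Metric.uniformContinuousOn_iff.1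
    (isCompact_Icc.uniformContinuousOn_of_continuous (s := Icc 0 γ.T) γ.cont.continuousOn)
    (ε / 2) (half_pos hε)
  filter_upwards [(tendsto_T_of_tendsto_psiDist h).eventually (eventually_gt_nhds hb),
    h.eventually (eventually_lt_nhds (lt_min hδ (half_pos hε)))] with i hbi hψ t ⟨ht0, htb⟩
  have hTi : 0 < (γs i).T := by linarith
  set s := t / (γs i).T
  have hs : s ∈ Icc (0 : ℝ) 1 :=
    ⟨div_nonneg ht0 hTi.le, (div_le_one hTi).2 (by linarith)⟩
  have hst : s * (γs i).T = t := div_mul_cancel₀ t hTi.ne'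
  have hclose : dist (s * γ.T) t < δ := by
    calc dist (s * γ.T) t = s * |(γs i).T - γ.T| := by
          rw [Real.dist_eq, ← hst, ← mul_sub, abs_mul, abs_of_nonneg hs.1, abs_sub_comm]
      _ ≤ psiDist (γs i) γ :=
          (mul_le_of_le_one_left (abs_nonneg _) hs.2).trans (abs_T_sub_le_psiDist _ _)
      _ < δ := hψ.trans_le (min_le_left _ _)
  have hsT : s * γ.T ∈ Icc 0 γ.T := ⟨mul_nonneg hs.1 γ.hT, mul_le_of_le_one_left γ.hT hs.2⟩
  have hreparam : dist ((γs i).toFun t) (γ.toFun (s * γ.T)) < ε / 2 := by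
    have := dist_le_psiDist (γs i) γ hs
    rw [hst] at this
    exact this.trans_lt (hψ.trans_le (min_le_right _ _))
  calc dist (γ.toFun t) ((γs i).toFun t)
      ≤ dist (γ.toFun t) (γ.toFun (s * γ.T)) + dist (γ.toFun (s * γ.T)) ((γs i).toFun t) :=
        dist_triangle _ _ _
    _ < ε / 2 + ε / 2 := by
        rw [dist_comm (γ.toFun t), dist_comm (γ.toFun _) ((γs i).toFun t)]
        exact add_lt_add (hγ _ hsT t ⟨ht0, by linarith⟩ hclose) hreparam
    _ = ε := add_halves ε

lemma tendsto_psiDist_restrictTo {a b : ℝ} (hab : a ≤ b)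
    (h : TendstoUniformlyOn (fun i => (γs i).toFun) γ.toFun l (Icc a b)) :
    Tendsto (fun i => psiDist ((γs i).restrictTo a b hab) (γ.restrictTo a b hab)) l (𝓝 0) := by
  rw [Metric.tendsto_nhds]
  intro ε hε
  filter_upwards [Metric.tendstoUniformlyOn_iff.1 h (ε / 2) (half_pos hε)] with i hi
  have hle := psiDist_restrictTo_le (γ₁ := γs i) (γ₂ := γ) hab (half_pos hε).le
    fun t ht => (dist_comm _ _).trans_le (hi t ht).le
  rw [Real.dist_eq, sub_zero, abs_of_nonneg (psiDist_nonneg _ _)]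
  linarith

end Convergence

/-- If `γₙ → γ` in `(C_f, ψ)` and `0 ≤ a < b < T(γ)`, then for all sufficiently
large `n` the restriction `γₙ|_{[a,b]}` is defined (i.e. `b < T(γₙ)`), and the restrictions
`γₙ|_{[a,b]}` converge to `γ|_{[a,b]}` in `(C_f, ψ)`. -/
theorem psi_tendsto_restrict (γn : ℕ → FiniteCurve) (γ : FiniteCurve) (a b : ℝ)
    (ha : 0 ≤ a) (hab : a < b) (hb : b < γ.T)
    (h : Tendsto (fun n => psiDist (γn n) γ) atTop (nhds 0)) :
    (∀ᶠ n in atTop, b < (γn n).T) ∧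
      Tendsto (fun n => psiDist ((γn n).restrictTo a b hab.le) (γ.restrictTo a b hab.le))
        atTop (nhds 0) :=
  ⟨(tendsto_T_of_tendsto_psiDist h).eventually (eventually_gt_nhds hb),
    tendsto_psiDist_restrictTo hab.le <|
      (tendstoUniformlyOn_of_tendsto_psiDist hb h).mono (Icc_subset_Icc_left ha)⟩
end
end

section
/- The trace of any parameterized tree 𝒯 = (X, Γ) with K spanning points in ℝ³ is a one-ended topological tree: it is path-connected, contains no subset homeomorphic to the circle S¹, and for any two points z, w in the trace there exists a unique injective path in the trace from z to w. -/
open Filter Set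

noncomputable section

/-- A transient parameterized curve in `ℝ³`: a continuous `γ : [0,∞) → ℝ³`
(modelled as a continuous function on `ℝ`) with `|γ(t)| → ∞` as `t → ∞`. -/
structure TransientCurve where
  toFun : ℝ → EuclideanSpace ℝ (Fin 3)
  cont : Continuous toFun
  transient : Tendsto (fun t => ‖toFun t‖) atTop atTop

/-- The metric `χ` on the space `C` of transient curves:
`χ(γ₁,γ₂) = Σ_{k≥1} 2^{−k} (1 ∧ max_{t ≤ k} |γ₁(t) − γ₂(t)|)`. -/
noncomputable def chiDist (γ₁ γ₂ : TransientCurve) : ℝ :=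
  ∑' k : ℕ, ((2 : ℝ) ^ (k + 1))⁻¹ *
    min 1 (⨆ t : Set.Icc (0 : ℝ) ((k : ℝ) + 1), dist (γ₁.toFun (t : ℝ)) (γ₂.toFun (t : ℝ)))

/-- A parameterized tree with `K` spanning points in `ℝ³`: spanning points `x i`, simple
transient curves `γ i` started at `x i`, and merging times `s i j` such that the curves
`γ i` and `γ j` agree after times `s i j`, `s j i` respectively, while their strict initial
segments have disjoint traces. -/
structure ParamTree (K : ℕ) where
  x : Fin K → EuclideanSpace ℝ (Fin 3)
  γ : Fin K → TransientCurve
  start : ∀ i, (γ i).toFun 0 = x i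
  simple : ∀ i, Set.InjOn (γ i).toFun (Set.Ici 0)
  s : Fin K → Fin K → ℝ
  s_nonneg : ∀ i j, 0 ≤ s i j
  merge : ∀ i j, ∀ u : ℝ, 0 ≤ u → (γ i).toFun (s i j + u) = (γ j).toFun (s j i + u)
  disj : ∀ i j, i ≠ j →
    Disjoint ((γ i).toFun '' Set.Ico 0 (s i j)) ((γ j).toFun '' Set.Ico 0 (s j i))

/-- The trace of a parameterized tree: the union of the traces of its curves. -/
def ParamTree.trace {K : ℕ} (𝒯 : ParamTree K) : Set (EuclideanSpace ℝ (Fin 3)) :=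
  ⋃ i, (𝒯.γ i).toFun '' Set.Ici 0

/-!
Transience makes the image of every closed set `F ⊆ [a, ∞)` under a curve closed, and the merging
axioms make the future of a point independent of the curve chosen through it. Hence every `c`
splits the trace into two closed sets meeting only in `c`: the points whose future passes
through `c`, and the points whose strict future avoids `c`. A connected subset of the trace
containing a point of the first kind other than `c` and a point of the second kind other than
`c` therefore contains `c`.

For `z = γ i a` and `w = γ j b`, every point of `γ i` strictly between `a` and the first time `γ i`
reaches the tail of `γ j` after `b`, and every point of `γ j` strictly between `b` and that branch
point, separates `z` from `w` in this sense. So the arc through the branch point lies in every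
closed connected subset of the trace containing `z` and `w`, in particular in the range of any
injective path from `z` to `w`; an arc has no proper connected subset containing both endpoints,
so that range is the arc itself. Two half circles with different ranges then exclude circles.
-/

open Function

local notation "ℝ³" => EuclideanSpace ℝ (Fin 3)

section Arcs

variable {X : Type*} [TopologicalSpace X]

theorem Path.range_eq_of_isPreconnected [T2Space X] {x y : X} {p : Path x y}
    (hp : Injective p) {S : Set X} (hS : IsPreconnected S) (hx : x ∈ S) (hy : y ∈ S)
    (hSp : S ⊆ range p) : S = range p := by
  have hIcc : Icc 0 1 ⊆ p ⁻¹' S :=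
    (hS.preimage_of_isClosedMap hp p.continuous.isClosedMap hSp).Icc_subset
      (by simpa using hx) (by simpa using hy)
  refine hSp.antisymm ?_
  rintro _ ⟨t, rfl⟩
  exact hIcc ⟨unitInterval.nonneg', unitInterval.le_one'⟩

theorem Path.injective_trans {x y z : X} {p : Path x y} {q : Path y z} (hp : Injective p)
    (hq : Injective q) (hpq : range p ∩ range q ⊆ {y}) : Injective (p.trans q) := by
  have hjunction : ∀ s t, p s = q t → (s : ℝ) = 1 ∧ (t : ℝ) = 0 := fun s t h => by
    have hy : p s = y := hpq ⟨mem_range_self s, h ▸ mem_range_self t⟩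
    exact ⟨congrArg Subtype.val (hp (hy.trans p.target.symm)),
      congrArg Subtype.val (hq ((h.symm.trans hy).trans q.source.symm))⟩
  intro s t hst
  simp only [Path.trans_apply] at hst
  apply Subtype.ext
  split_ifs at hst
  · have := congrArg Subtype.val (hp hst); simp only at this; linarith
  · have := hjunction _ _ hst; simp only at this; linarith
  · have := hjunction _ _ hst.symm; simp only at this; linarith
  · have := congrArg Subtype.val (hq hst); simp only at this; linarith

section SegmentMap

variable {f : ℝ → X} (hf : Continuous f) {a b : ℝ}

theorem Path.range_segment_map : range ((Path.segment a b).map hf) = f '' uIcc a b := by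
  rw [Path.map_coe, range_comp, Path.range_segment, segment_eq_uIcc]

theorem Path.injective_segment_map (hab : a ≠ b) (hinj : InjOn f (uIcc a b)) :
    Injective ((Path.segment a b).map hf) := by
  have hmem : ∀ t, Path.segment a b t ∈ uIcc a b := fun t => by
    rw [← segment_eq_uIcc, ← Path.range_segment]; exact mem_range_self t
  intro s t hst
  exact Path.segment_injective_of_ne hab (hinj (hmem s) (hmem t) hst)

end SegmentMap

theorem exists_injective_path_of_arcs_meet {f g : ℝ → X} (hf : Continuous f)
    (hg : Continuous g) {a m b u : ℝ} (ham : a ≤ m) (hbu : b ≤ u) (hfi : InjOn f (Icc a m))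
    (hgi : InjOn g (Icc b u)) (hmu : f m = g u)
    (hfg : ∀ s ∈ Icc a m, ∀ t ∈ Icc b u, f s = g t → s = m) (hne : f a ≠ g b) :
    ∃ p : Path (f a) (g b), Injective p ∧ range p ⊆ f '' Icc a m ∪ g '' Icc b u := by
  set p := (Path.segment a m).map hf
  set q := (Path.segment u b).map hg
  have hp_range : range p = f '' Icc a m := by
    rw [Path.range_segment_map, uIcc_of_le ham]
  have hq_range : range q = g '' Icc b u := by
    rw [Path.range_segment_map, uIcc_of_ge hbu]
  rcases ham.eq_or_lt with rfl | ham'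
  · refine ⟨q.cast hmu rfl, ?_, ?_⟩
    · rw [Path.cast_coe]
      refine Path.injective_segment_map hg (fun hub => hne (hmu.trans (by rw [hub]))) ?_
      rwa [uIcc_of_ge hbu]
    · rw [Path.cast_coe, hq_range]; exact subset_union_right
  rcases hbu.eq_or_lt with rfl | hbu'
  · refine ⟨p.cast rfl hmu.symm, ?_, ?_⟩
    · rw [Path.cast_coe]
      exact Path.injective_segment_map hf ham'.ne (by rwa [uIcc_of_le ham])
    · rw [Path.cast_coe, hp_range]; exact subset_union_left
  refine ⟨p.trans (q.cast hmu rfl), Path.injective_trans ?_ ?_ ?_, ?_⟩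
  · exact Path.injective_segment_map hf ham'.ne (by rwa [uIcc_of_le ham])
  · rw [Path.cast_coe]
    exact Path.injective_segment_map hg hbu'.ne' (by rwa [uIcc_of_ge hbu])
  · rintro _ ⟨hp', hq'⟩
    rw [Path.cast_coe, hq_range] at hq'
    rw [hp_range] at hp'
    obtain ⟨s, hs, rfl⟩ := hp'
    obtain ⟨t, ht, hts⟩ := hq'
    rw [hfg s hs t ht hts.symm]
    rfl
  · rw [Path.trans_range, Path.cast_coe, hp_range, hq_range]

theorem image_Icc_subset_of_image_Ioo_subset {f : ℝ → X} (hf : Continuous f) {S : Set X}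
    (hS : IsClosed S) {a b : ℝ} (ha : f a ∈ S) (hab : f '' Ioo a b ⊆ S) : f '' Icc a b ⊆ S := by
  rw [image_subset_iff] at hab ⊢
  rcases lt_or_ge a b with h | h
  · rw [← closure_Ioo h.ne]
    exact (hS.preimage hf).closure_subset_iff.2 hab
  · intro t ht
    rwa [le_antisymm (ht.2.trans h) ht.1]

theorem Circle.exists_injective_paths_range_ne :
    ∃ (z w : Circle) (p q : Path z w), Injective p ∧ Injective q ∧ range p ≠ range q := by
  -- the two half circles from `1` to `-1`; only the first passes through `exp (π / 2)`
  have hexp := Circle.exp.continuous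
  have hπ := Real.pi_pos
  have hp : Injective ((Path.segment 0 Real.pi).map hexp) :=
    Path.injective_segment_map hexp hπ.ne <| by
      rw [uIcc_of_le hπ.le]; exact Circle.exp_injOn_Icc (by linarith)
  have hq : Injective ((Path.segment (2 * Real.pi) Real.pi).map hexp) :=
    Path.injective_segment_map hexp (by linarith) <| by
      rw [uIcc_of_ge (by linarith)]; exact Circle.exp_injOn_Icc (by linarith)
  refine ⟨_, _, _, ((Path.segment (2 * Real.pi) Real.pi).map hexp).cast (by simp) rfl, hp,
    by rwa [Path.cast_coe], fun h => ?_⟩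
  rw [Path.cast_coe, Path.range_segment_map, Path.range_segment_map,
    uIcc_of_le hπ.le, uIcc_of_ge (by linarith)] at h
  obtain ⟨s, hs, hs'⟩ : Circle.exp (Real.pi / 2) ∈ Circle.exp '' Icc Real.pi (2 * Real.pi) :=
    h ▸ mem_image_of_mem _ ⟨by linarith, by linarith⟩
  have := Circle.exp_injOn_Icc (a := Real.pi / 2) (b := 2 * Real.pi) (by linarith)
    ⟨by linarith [hs.1], hs.2⟩ ⟨le_rfl, by linarith⟩ hs'
  linarith [hs.1]

theorem not_exists_homeomorph_circle_of_range_eq {T : Set X}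
    (hT : ∀ ⦃z w : X⦄ (p q : Path z w), Injective p → range p ⊆ T → Injective q →
      range q ⊆ T → range p = range q) :
    ¬ ∃ A ⊆ T, Nonempty (A ≃ₜ Circle) := by
  rintro ⟨A, hAT, ⟨e⟩⟩
  obtain ⟨z, w, p, q, hp, hq, hpq⟩ := Circle.exists_injective_paths_range_ne
  set F : Circle → X := (↑) ∘ e.symm
  have hF : Continuous F := continuous_subtype_val.comp e.symm.continuous
  have hFi : Injective F := Subtype.val_injective.comp e.symm.injective
  have hFT : ∀ r : Path z w, range (r.map hF) ⊆ T := fun r => by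
    rw [Path.map_coe, range_comp]
    exact (image_subset_range _ _).trans (range_subset_iff.2 fun c => hAT (e.symm c).2)
  apply hpq
  apply image_injective.2 hFi
  simpa only [Path.map_coe, range_comp] using
    hT (p.map hF) (q.map hF) (hFi.comp hp) (hFT p) (hFi.comp hq) (hFT q)

end Arcs

theorem TransientCurve.isClosed_image (γ : TransientCurve) {F : Set ℝ} (hF : IsClosed F) {a : ℝ}
    (hFa : F ⊆ Ici a) : IsClosed (γ.toFun '' F) := by
  refine isClosed_of_closure_subset fun y hy => ?_
  obtain ⟨T, hT⟩ := (γ.transient.eventually_ge_atTop (‖y‖ + 1)).exists_forall_of_atTop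
  have hsplit : γ.toFun '' F ⊆ γ.toFun '' (F ∩ Iic T) ∪ {x | ‖y‖ + 1 ≤ ‖x‖} := by
    rintro _ ⟨t, ht, rfl⟩
    rcases le_total t T with h | h
    · exact Or.inl ⟨t, ⟨ht, h⟩, rfl⟩
    · exact Or.inr (hT t h)
  have hcompact : IsCompact (F ∩ Iic T) :=
    isCompact_Icc.of_isClosed_subset (hF.inter isClosed_Iic) fun t ht => ⟨hFa ht.1, ht.2⟩
  have hclosed : IsClosed (γ.toFun '' (F ∩ Iic T) ∪ {x | ‖y‖ + 1 ≤ ‖x‖}) :=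
    (hcompact.image γ.cont).isClosed.union (isClosed_le continuous_const continuous_norm)
  rcases hclosed.closure_subset_iff.2 hsplit hy with h | h
  · exact image_mono inter_subset_left h
  · exact absurd h (by simp)

namespace ParamTree

variable {K : ℕ} (𝒯 : ParamTree K)

theorem mem_trace_iff {y : ℝ³} :
    y ∈ 𝒯.trace ↔ ∃ i t, 0 ≤ t ∧ (𝒯.γ i).toFun t = y := by
  simp [ParamTree.trace]

theorem map_add_eq_of_map_eq {i j : Fin K} {a b : ℝ} (ha : 0 ≤ a) (hb : 0 ≤ b)
    (h : (𝒯.γ i).toFun a = (𝒯.γ j).toFun b) {u : ℝ} (hu : 0 ≤ u) :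
    (𝒯.γ i).toFun (a + u) = (𝒯.γ j).toFun (b + u) := by
  -- by `disj`, one of the two times is already past its merging time
  wlog hs : 𝒯.s i j ≤ a generalizing i j a b
  · rcases eq_or_ne i j with rfl | hij
    · rw [𝒯.simple i ha hb h]
    have hs' : 𝒯.s j i ≤ b := by
      by_contra hb'
      exact disjoint_left.1 (𝒯.disj i j hij) ⟨a, ⟨ha, not_le.1 hs⟩, rfl⟩
        ⟨b, ⟨hb, not_le.1 hb'⟩, h.symm⟩
    exact (this hb ha h.symm hs').symm
  have hmerge : ∀ v, 0 ≤ v →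
      (𝒯.γ i).toFun (a + v) = (𝒯.γ j).toFun (𝒯.s j i + (a - 𝒯.s i j) + v) := fun v hv => by
    convert 𝒯.merge i j (a - 𝒯.s i j + v) (by linarith) using 2 <;> ring
  have hb' : b = 𝒯.s j i + (a - 𝒯.s i j) :=
    𝒯.simple j hb (mem_Ici.2 (by linarith [𝒯.s_nonneg j i])) (by simpa [← h] using hmerge 0 le_rfl)
  rw [hb']
  exact hmerge u hu

/- For the tree order on the trace, in which `y ≤ c` when `c` lies on a curve through `y` after
`y`, `down c` is `{y | y ≤ c}` and `up c` is `{y | ¬ y < c}`. -/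
def down (c : ℝ³) : Set ℝ³ :=
  ⋃ l, (𝒯.γ l).toFun '' {e | 0 ≤ e ∧ ∃ t, e ≤ t ∧ (𝒯.γ l).toFun t = c}

def up (c : ℝ³) : Set ℝ³ :=
  ⋃ l, (𝒯.γ l).toFun '' {e | 0 ≤ e ∧ ∀ t, (𝒯.γ l).toFun t = c → t ≤ e}

variable {𝒯}

theorem mem_down_iff {l : Fin K} {e : ℝ} (he : 0 ≤ e) {c : ℝ³} :
    (𝒯.γ l).toFun e ∈ 𝒯.down c ↔ ∃ t, e ≤ t ∧ (𝒯.γ l).toFun t = c := by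
  refine ⟨fun h => ?_, fun h => mem_iUnion.2 ⟨l, e, ⟨he, h⟩, rfl⟩⟩
  obtain ⟨k, e', ⟨he', t, het, rfl⟩, hk⟩ := mem_iUnion.1 h
  refine ⟨e + (t - e'), by linarith, ?_⟩
  rw [← 𝒯.map_add_eq_of_map_eq he' he hk (by linarith), add_sub_cancel]

theorem mem_up_iff {l : Fin K} {e : ℝ} (he : 0 ≤ e) {c : ℝ³} :
    (𝒯.γ l).toFun e ∈ 𝒯.up c ↔ ∀ t, (𝒯.γ l).toFun t = c → t ≤ e := by
  refine ⟨fun h => ?_, fun h => mem_iUnion.2 ⟨l, e, ⟨he, h⟩, rfl⟩⟩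
  obtain ⟨k, e', ⟨he', hk⟩, hke⟩ := mem_iUnion.1 h
  rintro t rfl
  by_contra! het
  have := hk (e' + (t - e)) (by
    rw [𝒯.map_add_eq_of_map_eq he' he hke (by linarith), add_sub_cancel])
  linarith

variable (𝒯)

theorem isClosed_down (c : ℝ³) : IsClosed (𝒯.down c) := by
  refine isClosed_iUnion_of_finite fun l => ?_
  rcases eq_empty_or_nonempty {e | 0 ≤ e ∧ ∃ t, e ≤ t ∧ (𝒯.γ l).toFun t = c} with
    hempty | ⟨e, he, t, het, ht⟩
  · rw [hempty, image_empty]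
    exact isClosed_empty
  have hD : {e | 0 ≤ e ∧ ∃ t, e ≤ t ∧ (𝒯.γ l).toFun t = c} = Icc 0 t := by
    ext e'
    refine ⟨fun ⟨he', t', het', ht'⟩ => ⟨he', ?_⟩, fun he' => ⟨he'.1, t, he'.2, ht⟩⟩
    rwa [← 𝒯.simple l (he'.trans het') (he.trans het) (ht'.trans ht.symm)]
  rw [hD]
  exact (isCompact_Icc.image (𝒯.γ l).cont).isClosed

theorem isClosed_up (c : ℝ³) : IsClosed (𝒯.up c) := by
  refine isClosed_iUnion_of_finite fun l => (𝒯.γ l).isClosed_image ?_ fun e he => he.1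
  have : IsClosed {e | ∀ t, (𝒯.γ l).toFun t = c → t ≤ e} := by
    simp only [ofPred_forall]
    exact isClosed_iInter fun t => isClosed_iInter fun _ => isClosed_Ici
  exact isClosed_Ici.inter this

theorem trace_subset_down_union_up (c : ℝ³) :
    𝒯.trace ⊆ 𝒯.down c ∪ 𝒯.up c := by
  intro y hy
  obtain ⟨l, e, he, rfl⟩ := 𝒯.mem_trace_iff.1 hy
  rw [mem_union, mem_down_iff he, mem_up_iff he]
  exact or_iff_not_imp_left.2 fun h t ht => (not_le.1 fun het => h ⟨t, het, ht⟩).le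

theorem down_inter_up_subset (c : ℝ³) : 𝒯.down c ∩ 𝒯.up c ⊆ {c} := by
  rintro _ ⟨hd, hu⟩
  obtain ⟨l, e, ⟨he, t, het, rfl⟩, rfl⟩ := mem_iUnion.1 hd
  rw [mem_singleton_iff, le_antisymm het ((mem_up_iff he).1 hu t rfl)]

theorem mem_of_isPreconnected {S : Set ℝ³} (hS : IsPreconnected S) (hST : S ⊆ 𝒯.trace)
    {z w c : ℝ³} (hz : z ∈ S) (hw : w ∈ S) (hzc : z ∉ 𝒯.up c) (hwc : w ∉ 𝒯.down c) : c ∈ S := by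
  by_contra hc
  have hdisj : S ∩ (𝒯.down c ∩ 𝒯.up c) = ∅ :=
    eq_empty_of_forall_notMem fun y ⟨hy, hyc⟩ => hc (𝒯.down_inter_up_subset c hyc ▸ hy)
  rcases isPreconnected_iff_subset_of_disjoint_closed.1 hS _ _ (𝒯.isClosed_down c)
    (𝒯.isClosed_up c) (hST.trans (𝒯.trace_subset_down_union_up c)) hdisj with h | h
  · exact hwc (h hw)
  · exact hzc (h hz)

/-- `γ i m = γ j u` is the branch point of `γ i a` and `γ j b`. -/
structure IsMeet (i j : Fin K) (a b m u : ℝ) : Prop where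
  nonneg_left : 0 ≤ a
  nonneg_right : 0 ≤ b
  le_left : a ≤ m
  le_right : b ≤ u
  map_eq : (𝒯.γ i).toFun m = (𝒯.γ j).toFun u
  mem_tail_iff : ∀ t, a ≤ t → ((𝒯.γ i).toFun t ∈ (𝒯.γ j).toFun '' Ici b ↔ m ≤ t)

def arc (i j : Fin K) (a b m u : ℝ) : Set ℝ³ :=
  (𝒯.γ i).toFun '' Icc a m ∪ (𝒯.γ j).toFun '' Icc b u

theorem exists_isMeet (i j : Fin K) {a b : ℝ} (ha : 0 ≤ a) (hb : 0 ≤ b) :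
    ∃ m u, 𝒯.IsMeet i j a b m u := by
  set T := {t | a ≤ t ∧ (𝒯.γ i).toFun t ∈ (𝒯.γ j).toFun '' Ici b}
  have hT_up : ∀ t ∈ T, ∀ t', t ≤ t' → t' ∈ T := by
    rintro t ⟨hat, s, hs, hst⟩ t' htt'
    refine ⟨hat.trans htt', s + (t' - t), mem_Ici.2 (by linarith [mem_Ici.1 hs]), ?_⟩
    rw [𝒯.map_add_eq_of_map_eq (hb.trans hs) (ha.trans hat) hst (sub_nonneg.2 htt'),
      add_sub_cancel]
  have hT_nonempty : T.Nonempty :=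
    ⟨𝒯.s i j + max a b, by linarith [le_max_left a b, 𝒯.s_nonneg i j], 𝒯.s j i + max a b,
      mem_Ici.2 (by linarith [le_max_right a b, 𝒯.s_nonneg j i]),
      (𝒯.merge i j _ (ha.trans (le_max_left a b))).symm⟩
  have hT_closed : IsClosed T := isClosed_Ici.inter
    (((𝒯.γ j).isClosed_image isClosed_Ici subset_rfl).preimage (𝒯.γ i).cont)
  have hT_bdd : BddBelow T := ⟨a, fun t ht => ht.1⟩
  have hm : sInf T ∈ T := hT_closed.csInf_mem hT_nonempty hT_bdd
  obtain ⟨u, hu, hmu⟩ := hm.2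
  exact ⟨sInf T, u, ha, hb, hm.1, hu, hmu.symm, fun t hat =>
    ⟨fun ht => csInf_le hT_bdd ⟨hat, ht⟩, fun ht => (hT_up _ hm t ht).2⟩⟩

namespace IsMeet

variable {𝒯} {i j : Fin K} {a b m u : ℝ}

theorem notMem_tail (h : 𝒯.IsMeet i j a b m u) {t : ℝ} (ht : t ∈ Ico b u) :
    (𝒯.γ j).toFun t ∉ (𝒯.γ i).toFun '' Ici a := by
  rintro ⟨s, hs, hst⟩
  have hms : m ≤ s := (h.mem_tail_iff s hs).1 ⟨t, ht.1, hst.symm⟩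
  have hmerge := 𝒯.map_add_eq_of_map_eq (h.nonneg_right.trans ht.1)
    (h.nonneg_left.trans hs) hst.symm (sub_nonneg.2 ht.2.le)
  rw [add_sub_cancel, ← h.map_eq] at hmerge
  have := 𝒯.simple i (h.nonneg_left.trans h.le_left)
    (mem_Ici.2 (by linarith [h.nonneg_left, mem_Ici.1 hs, ht.2])) hmerge
  linarith [ht.2]

theorem isPreconnected_arc (h : 𝒯.IsMeet i j a b m u) : IsPreconnected (𝒯.arc i j a b m u) :=
  (isPreconnected_Icc.image _ (𝒯.γ i).cont.continuousOn).union ((𝒯.γ i).toFun m)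
    ⟨m, ⟨h.le_left, le_rfl⟩, rfl⟩ ⟨u, ⟨h.le_right, le_rfl⟩, h.map_eq.symm⟩
    (isPreconnected_Icc.image _ (𝒯.γ j).cont.continuousOn)

theorem arc_subset_trace (h : 𝒯.IsMeet i j a b m u) : 𝒯.arc i j a b m u ⊆ 𝒯.trace := by
  rintro _ (⟨t, ht, rfl⟩ | ⟨t, ht, rfl⟩)
  · exact 𝒯.mem_trace_iff.2 ⟨i, t, h.nonneg_left.trans ht.1, rfl⟩
  · exact 𝒯.mem_trace_iff.2 ⟨j, t, h.nonneg_right.trans ht.1, rfl⟩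

theorem arc_subset (h : 𝒯.IsMeet i j a b m u) {S : Set ℝ³} (hS : IsPreconnected S)
    (hS_closed : IsClosed S) (hST : S ⊆ 𝒯.trace) (hz : (𝒯.γ i).toFun a ∈ S)
    (hw : (𝒯.γ j).toFun b ∈ S) : 𝒯.arc i j a b m u ⊆ S := by
  refine union_subset (image_Icc_subset_of_image_Ioo_subset (𝒯.γ i).cont hS_closed hz ?_)
    (image_Icc_subset_of_image_Ioo_subset (𝒯.γ j).cont hS_closed hw ?_)
  · rintro _ ⟨t, ht, rfl⟩
    refine 𝒯.mem_of_isPreconnected hS hST hz hw ?_ ?_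
    · rw [mem_up_iff h.nonneg_left]
      exact fun hup => (hup t rfl).not_gt ht.1
    · rw [mem_down_iff h.nonneg_right]
      rintro ⟨s, hs, hst⟩
      exact ((h.mem_tail_iff t ht.1.le).1 ⟨s, hs, hst⟩).not_gt ht.2
  · rintro _ ⟨t, ht, rfl⟩
    refine 𝒯.mem_of_isPreconnected hS hST hw hz ?_ ?_
    · rw [mem_up_iff h.nonneg_right]
      exact fun hup => (hup t rfl).not_gt ht.1
    · rw [mem_down_iff h.nonneg_left]
      rintro ⟨s, hs, hst⟩
      exact h.notMem_tail ⟨ht.1.le, ht.2⟩ ⟨s, hs, hst⟩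

theorem exists_injective_path (h : 𝒯.IsMeet i j a b m u)
    (hne : (𝒯.γ i).toFun a ≠ (𝒯.γ j).toFun b) :
    ∃ p : Path ((𝒯.γ i).toFun a) ((𝒯.γ j).toFun b),
      Injective p ∧ range p ⊆ 𝒯.arc i j a b m u :=
  exists_injective_path_of_arcs_meet (𝒯.γ i).cont (𝒯.γ j).cont h.le_left h.le_right
    ((𝒯.simple i).mono fun _ ht => h.nonneg_left.trans ht.1)
    ((𝒯.simple j).mono fun _ ht => h.nonneg_right.trans ht.1) h.map_eq
    (fun s hs t ht hst => le_antisymm hs.2 ((h.mem_tail_iff s hs.1).1 ⟨t, ht.1, hst.symm⟩)) hne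

end IsMeet

theorem range_eq_of_injective {z w : ℝ³} {p q : Path z w} (hp : Injective p)
    (hpT : range p ⊆ 𝒯.trace) (hq : Injective q) (hqT : range q ⊆ 𝒯.trace) : range p = range q := by
  obtain ⟨i, a, ha, rfl⟩ := 𝒯.mem_trace_iff.1 (hpT ⟨0, p.source⟩)
  obtain ⟨j, b, hb, rfl⟩ := 𝒯.mem_trace_iff.1 (hpT ⟨1, p.target⟩)
  obtain ⟨m, u, h⟩ := 𝒯.exists_isMeet i j ha hb
  have harc : ∀ r : Path ((𝒯.γ i).toFun a) ((𝒯.γ j).toFun b), Injective r →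
      range r ⊆ 𝒯.trace → 𝒯.arc i j a b m u = range r := fun r hr hrT =>
    Path.range_eq_of_isPreconnected hr h.isPreconnected_arc
      (Or.inl ⟨a, ⟨le_rfl, h.le_left⟩, rfl⟩) (Or.inr ⟨b, ⟨le_rfl, h.le_right⟩, rfl⟩)
      (h.arc_subset (isPreconnected_range r.continuous) (isCompact_range r.continuous).isClosed
        hrT ⟨0, r.source⟩ ⟨1, r.target⟩)
  rw [← harc p hp hpT, ← harc q hq hqT]

theorem exists_injective_path {z w : ℝ³} (hz : z ∈ 𝒯.trace) (hw : w ∈ 𝒯.trace)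
    (hzw : z ≠ w) : ∃ p : Path z w, Injective p ∧ range p ⊆ 𝒯.trace := by
  obtain ⟨i, a, ha, rfl⟩ := 𝒯.mem_trace_iff.1 hz
  obtain ⟨j, b, hb, rfl⟩ := 𝒯.mem_trace_iff.1 hw
  obtain ⟨m, u, h⟩ := 𝒯.exists_isMeet i j ha hb
  obtain ⟨p, hp, hp_arc⟩ := h.exists_injective_path hzw
  exact ⟨p, hp, hp_arc.trans h.arc_subset_trace⟩

theorem isPathConnected_trace (hK : 0 < K) : IsPathConnected 𝒯.trace := by
  refine isPathConnected_iff.2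
    ⟨⟨_, 𝒯.mem_trace_iff.2 ⟨⟨0, hK⟩, 0, le_rfl, rfl⟩⟩, fun z hz w hw => ?_⟩
  rcases eq_or_ne z w with rfl | hzw
  · exact JoinedIn.refl hz
  obtain ⟨p, -, hpT⟩ := 𝒯.exists_injective_path hz hw hzw
  exact ⟨p, fun t => hpT (mem_range_self t)⟩

end ParamTree

/-- The trace of any parameterized tree with `K ≥ 1` spanning points is a
one-ended topological tree: it is path-connected, contains no subset homeomorphic to the
circle `S¹`, and between any two distinct points of the trace there is an injective path
in the trace whose image (arc) is unique. -/
theorem paramTree_trace_is_topological_tree (K : ℕ) (hK : 0 < K) (𝒯 : ParamTree K) :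
    IsPathConnected 𝒯.trace ∧
    (¬ ∃ A : Set (EuclideanSpace ℝ (Fin 3)), A ⊆ 𝒯.trace ∧ Nonempty (A ≃ₜ Circle)) ∧
    (∀ z ∈ 𝒯.trace, ∀ w ∈ 𝒯.trace, z ≠ w →
      (∃ p : Path z w, Function.Injective ⇑p ∧ Set.range ⇑p ⊆ 𝒯.trace) ∧
      (∀ p q : Path z w, Function.Injective ⇑p → Set.range ⇑p ⊆ 𝒯.trace →
        Function.Injective ⇑q → Set.range ⇑q ⊆ 𝒯.trace → Set.range ⇑p = Set.range ⇑q)) :=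
  ⟨𝒯.isPathConnected_trace hK,
    not_exists_homeomorph_circle_of_range_eq fun _ _ _ _ => 𝒯.range_eq_of_injective,
    fun _ hz _ hw hzw => ⟨𝒯.exists_injective_path hz hw hzw, fun _ _ => 𝒯.range_eq_of_injective⟩⟩
end
end

section
/- Let X = {x(1), …, x(K)} ⊂ ℝ³ and suppose: (a) γ^{x(1),ỹ(1)} is a simple transient parameterized curve starting at x(1); (b) for i = 2, …, K, γ^{x(i),ỹ(i)} is a simple finite parameterized curve starting at x(i) and ending at ỹ(i), where ỹ(i) is its first hitting point of the union of traces of γ^{x(j),ỹ(j)} for j < i. Then there is a collection Γ = {γ^{x(i)}}_{1≤i≤K} of transient curves, obtained by concatenating each γ^{x(i),ỹ(i)} with the appropriate tail of an earlier curve, such that (X, Γ) is a parameterized tree (i.e., merging times satisfying the merging and disjointness conditions exist for every pair of indices). -/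
open Filter Set
open scoped Classical

noncomputable section

/-- The trace of the `j`-th essential branch: for `j = 0` the trace of the transient curve
`γ0`, and for `j > 0` the trace of the finite curve `c j`. -/
noncomputable def branchTrace {K : ℕ} (γ0 : TransientCurve) (c : Fin K → FiniteCurve)
    (j : Fin K) : Set (EuclideanSpace ℝ (Fin 3)) :=
  if j.val = 0 then γ0.toFun '' Set.Ici 0 else (c j).toFun '' Set.Icc 0 (c j).T

/-- concatenation (with a continuity-forcing correction term, which vanishes when the
curves match up). -/
noncomputable def glue (f : FiniteCurve) (τ : ℝ) (g : TransientCurve) : TransientCurve where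
  toFun t := if t ≤ f.T then f.toFun t else
    g.toFun (τ + t - f.T) + (f.toFun f.T - g.toFun τ)
  cont := by
    refine Continuous.if_le f.cont ?_ continuous_id continuous_const ?_
    · exact ((g.cont.comp (by continuity)).add continuous_const)
    · intro x hx
      subst hx
      simp
  transient := by
    have h1 : Tendsto (fun t : ℝ => ‖g.toFun (τ + t - f.T)‖ - ‖f.toFun f.T - g.toFun τ‖)
        atTop atTop := by
      apply tendsto_atTop_add_const_right
      exact g.transient.comp (by
        have : Tendsto (fun t : ℝ => τ + t - f.T) atTop atTop := by
          apply tendsto_atTop_add_const_right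
          exact tendsto_atTop_add_const_left _ _ tendsto_id
        exact this)
    refine tendsto_atTop_mono' _ ?_ h1
    filter_upwards [eventually_gt_atTop f.T] with t ht
    have hnot : ¬ t ≤ f.T := not_le.mpr ht
    simp only [hnot, if_false]
    have h2 := norm_add_le (g.toFun (τ + t - f.T) + (f.toFun f.T - g.toFun τ))
      (-(f.toFun f.T - g.toFun τ))
    simp only [add_neg_cancel_right, norm_neg] at h2
    linarith

noncomputable def branchFun {K : ℕ} (γ0 : TransientCurve) (c : Fin K → FiniteCurve)
    (j : Fin K) : ℝ → EuclideanSpace ℝ (Fin 3) :=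
  if j.val = 0 then γ0.toFun else (c j).toFun

noncomputable def parentIx {K : ℕ} (γ0 : TransientCurve) (c : Fin K → FiniteCurve)
    (i : Fin K) : Fin K :=
  if h : ∃ j : Fin K, j < i ∧ (c i).toFun (c i).T ∈ branchTrace γ0 c j then h.choose
  else ⟨0, Nat.lt_of_le_of_lt (Nat.zero_le _) i.isLt⟩

lemma parentIx_val_lt {K : ℕ} (γ0 : TransientCurve) (c : Fin K → FiniteCurve)
    (i : Fin K) (hi : 0 < i.val) : (parentIx γ0 c i).val < i.val := by
  unfold parentIx
  split
  · next h => exact h.choose_spec.1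
  · exact hi

noncomputable def hitTime {K : ℕ} (γ0 : TransientCurve) (c : Fin K → FiniteCurve)
    (i : Fin K) : ℝ :=
  if h : ∃ t : ℝ, 0 ≤ t ∧ branchFun γ0 c (parentIx γ0 c i) t = (c i).toFun (c i).T
      ∧ (0 < (parentIx γ0 c i).val → t ≤ (c (parentIx γ0 c i)).T)
  then h.choose else 0

noncomputable def G {K : ℕ} (γ0 : TransientCurve) (c : Fin K → FiniteCurve) :
    ℕ → TransientCurve
  | n =>
    if h : n < K ∧ 0 < n then
      glue (c ⟨n, h.1⟩) (hitTime γ0 c ⟨n, h.1⟩)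
        (G γ0 c (parentIx γ0 c ⟨n, h.1⟩).val)
    else γ0
  termination_by n => n
  decreasing_by exact parentIx_val_lt γ0 c ⟨n, h.1⟩ h.2

lemma G_eq {K : ℕ} (γ0 : TransientCurve) (c : Fin K → FiniteCurve) (n : ℕ) :
    G γ0 c n = if h : n < K ∧ 0 < n then
      glue (c ⟨n, h.1⟩) (hitTime γ0 c ⟨n, h.1⟩)
        (G γ0 c (parentIx γ0 c ⟨n, h.1⟩).val)
    else γ0 := by
  rw [G]

section Specs

variable {K : ℕ} (γ0 : TransientCurve) (c : Fin K → FiniteCurve)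

lemma parentIx_spec (i : Fin K)
    (hhiti : (c i).toFun (c i).T ∈ ⋃ (j : Fin K) (_ : j < i), branchTrace γ0 c j) :
    parentIx γ0 c i < i ∧ (c i).toFun (c i).T ∈ branchTrace γ0 c (parentIx γ0 c i) := by
  have h : ∃ j : Fin K, j < i ∧ (c i).toFun (c i).T ∈ branchTrace γ0 c j := by
    simpa [Set.mem_iUnion] using hhiti
  unfold parentIx
  rw [dif_pos h]
  exact h.choose_spec

lemma hitTime_spec (i : Fin K)
    (hhiti : (c i).toFun (c i).T ∈ ⋃ (j : Fin K) (_ : j < i), branchTrace γ0 c j) :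
    0 ≤ hitTime γ0 c i ∧
      branchFun γ0 c (parentIx γ0 c i) (hitTime γ0 c i) = (c i).toFun (c i).T ∧
      (0 < (parentIx γ0 c i).val → hitTime γ0 c i ≤ (c (parentIx γ0 c i)).T) := by
  have hmem := (parentIx_spec γ0 c i hhiti).2
  have h : ∃ t : ℝ, 0 ≤ t ∧ branchFun γ0 c (parentIx γ0 c i) t = (c i).toFun (c i).T
      ∧ (0 < (parentIx γ0 c i).val → t ≤ (c (parentIx γ0 c i)).T) := by
    by_cases hp : (parentIx γ0 c i).val = 0
    · rw [branchTrace, if_pos hp] at hmem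
      obtain ⟨t, ht, hte⟩ := hmem
      exact ⟨t, ht, by rw [branchFun, if_pos hp]; exact hte, fun h => absurd hp (by omega)⟩
    · rw [branchTrace, if_neg hp] at hmem
      obtain ⟨t, ht, hte⟩ := hmem
      exact ⟨t, ht.1, by rw [branchFun, if_neg hp]; exact hte, fun _ => ht.2⟩
  unfold hitTime
  rw [dif_pos h]
  exact h.choose_spec

lemma G_zero : G γ0 c 0 = γ0 := by
  rw [G_eq]; simp

lemma G_val_eq_glue (i : Fin K) (hi : 0 < i.val) :
    G γ0 c i.val = glue (c i) (hitTime γ0 c i) (G γ0 c (parentIx γ0 c i).val) := by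
  rw [G_eq, dif_pos ⟨i.isLt, hi⟩]

lemma G_apply_le (i : Fin K) (hi : 0 < i.val) {t : ℝ} (ht : t ≤ (c i).T) :
    (G γ0 c i.val).toFun t = (c i).toFun t := by
  rw [G_val_eq_glue γ0 c i hi]
  simp [glue, ht]

lemma endpoint_eq (i : Fin K) (hi : 0 < i.val)
    (hhiti : (c i).toFun (c i).T ∈ ⋃ (j : Fin K) (_ : j < i), branchTrace γ0 c j) :
    (c i).toFun (c i).T = (G γ0 c (parentIx γ0 c i).val).toFun (hitTime γ0 c i) := by
  have hs := hitTime_spec γ0 c i hhiti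
  by_cases hp : (parentIx γ0 c i).val = 0
  · rw [hp, G_zero]
    rw [branchFun, if_pos hp] at hs
    exact hs.2.1.symm
  · have hppos : 0 < (parentIx γ0 c i).val := by omega
    rw [G_apply_le γ0 c _ hppos (hs.2.2 hppos)]
    rw [branchFun, if_neg hp] at hs
    exact hs.2.1.symm

lemma G_tail (i : Fin K) (hi : 0 < i.val)
    (hhiti : (c i).toFun (c i).T ∈ ⋃ (j : Fin K) (_ : j < i), branchTrace γ0 c j)
    (u : ℝ) (hu : 0 ≤ u) :
    (G γ0 c i.val).toFun ((c i).T + u) =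
      (G γ0 c (parentIx γ0 c i).val).toFun (hitTime γ0 c i + u) := by
  rcases eq_or_lt_of_le hu with rfl | hu'
  · rw [add_zero, add_zero, G_apply_le γ0 c i hi le_rfl]
    exact endpoint_eq γ0 c i hi hhiti
  · rw [G_val_eq_glue γ0 c i hi]
    have hnot : ¬ ((c i).T + u ≤ (c i).T) := by linarith
    simp only [glue, hnot, if_false]
    rw [show hitTime γ0 c i + ((c i).T + u) - (c i).T = hitTime γ0 c i + u by ring]
    rw [← endpoint_eq γ0 c i hi hhiti]
    abel

lemma G_apply_gt (i : Fin K) (hi : 0 < i.val)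
    (hhiti : (c i).toFun (c i).T ∈ ⋃ (j : Fin K) (_ : j < i), branchTrace γ0 c j)
    {t : ℝ} (ht : (c i).T ≤ t) :
    (G γ0 c i.val).toFun t =
      (G γ0 c (parentIx γ0 c i).val).toFun (hitTime γ0 c i + (t - (c i).T)) := by
  have := G_tail γ0 c i hi hhiti (t - (c i).T) (by linarith)
  rwa [show (c i).T + (t - (c i).T) = t by ring] at this

end Specs

section Induct

variable {K : ℕ} (γ0 : TransientCurve) (c : Fin K → FiniteCurve)

lemma G_trace
    (hhit : ∀ i : Fin K, 0 < i.val →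
      (c i).toFun (c i).T ∈ ⋃ (j : Fin K) (_ : j < i), branchTrace γ0 c j)
    (n : ℕ) (hn : n < K) :
    (G γ0 c n).toFun '' Set.Ici 0 ⊆
      ⋃ (k : Fin K) (_ : k.val ≤ n), branchTrace γ0 c k := by
  induction n using Nat.strong_induction_on with
  | _ n ih =>
  rcases Nat.eq_zero_or_pos n with rfl | hpos
  · rw [G_zero]
    intro y hy
    refine Set.mem_iUnion.mpr ⟨⟨0, hn⟩, Set.mem_iUnion.mpr ⟨le_rfl, ?_⟩⟩
    rw [branchTrace, if_pos rfl]
    exact hy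
  · set i : Fin K := ⟨n, hn⟩ with hidef
    have hi : 0 < i.val := hpos
    rintro y ⟨t, ht, rfl⟩
    by_cases htT : t ≤ (c i).T
    · rw [show n = i.val from rfl, G_apply_le γ0 c i hi htT]
      refine Set.mem_iUnion.mpr ⟨i, Set.mem_iUnion.mpr ⟨le_rfl, ?_⟩⟩
      rw [branchTrace, if_neg (by omega)]
      exact ⟨t, ⟨ht, htT⟩, rfl⟩
    · push_neg at htT
      rw [show n = i.val from rfl, G_apply_gt γ0 c i hi (hhit i hi) htT.le]
      have hτ := (hitTime_spec γ0 c i (hhit i hi)).1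
      have hplt := parentIx_val_lt γ0 c i hi
      have hsub := ih (parentIx γ0 c i).val hplt (parentIx γ0 c i).isLt
      have hmem : (G γ0 c (parentIx γ0 c i).val).toFun
          (hitTime γ0 c i + (t - (c i).T)) ∈
          (G γ0 c (parentIx γ0 c i).val).toFun '' Set.Ici 0 :=
        ⟨_, by simp only [Set.mem_Ici]; linarith, rfl⟩
      have := hsub hmem
      rw [Set.mem_iUnion] at this ⊢
      obtain ⟨k, hk⟩ := this
      rw [Set.mem_iUnion] at hk
      obtain ⟨hk1, hk2⟩ := hk
      have hin : i.val = n := rfl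
      exact ⟨k, Set.mem_iUnion.mpr ⟨by omega, hk2⟩⟩

lemma G_trace_lt
    (hhit : ∀ i : Fin K, 0 < i.val →
      (c i).toFun (c i).T ∈ ⋃ (j : Fin K) (_ : j < i), branchTrace γ0 c j)
    {i j : Fin K} (hji : j < i) :
    (G γ0 c j.val).toFun '' Set.Ici 0 ⊆
      ⋃ (k : Fin K) (_ : k < i), branchTrace γ0 c k := by
  refine (G_trace γ0 c hhit j.val j.isLt).trans ?_
  intro y hy
  rw [Set.mem_iUnion] at hy ⊢
  obtain ⟨k, hk⟩ := hy
  rw [Set.mem_iUnion] at hk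
  obtain ⟨hk1, hk2⟩ := hk
  refine ⟨k, Set.mem_iUnion.mpr ⟨?_, hk2⟩⟩
  have : j.val < i.val := hji
  exact Fin.lt_def.mpr (by omega)

lemma G_inj
    (hγ0inj : Set.InjOn γ0.toFun (Set.Ici 0))
    (hcinj : ∀ i : Fin K, 0 < i.val → Set.InjOn (c i).toFun (Set.Icc 0 (c i).T))
    (hhit : ∀ i : Fin K, 0 < i.val →
      (c i).toFun (c i).T ∈ ⋃ (j : Fin K) (_ : j < i), branchTrace γ0 c j)
    (hfirst : ∀ i : Fin K, 0 < i.val → ∀ t ∈ Set.Ico (0 : ℝ) (c i).T,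
      (c i).toFun t ∉ ⋃ (j : Fin K) (_ : j < i), branchTrace γ0 c j)
    (n : ℕ) (hn : n < K) :
    Set.InjOn (G γ0 c n).toFun (Set.Ici 0) := by
  induction n using Nat.strong_induction_on with
  | _ n ih =>
  rcases Nat.eq_zero_or_pos n with rfl | hpos
  · rw [G_zero]; exact hγ0inj
  · set i : Fin K := ⟨n, hn⟩ with hidef
    have hi : 0 < i.val := hpos
    have hplt := parentIx_val_lt γ0 c i hi
    have ihp := ih (parentIx γ0 c i).val hplt (parentIx γ0 c i).isLt
    have key : ∀ a b : ℝ, 0 ≤ a → 0 ≤ b → a ≤ b →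
        (G γ0 c n).toFun a = (G γ0 c n).toFun b → a = b := by
      intro a b ha hb hab heq
      by_cases hbT : b ≤ (c i).T
      · rw [show n = i.val from rfl, G_apply_le γ0 c i hi (le_trans hab hbT),
          G_apply_le γ0 c i hi hbT] at heq
        exact hcinj i hi ⟨ha, le_trans hab hbT⟩ ⟨hb, hbT⟩ heq
      · push_neg at hbT
        by_cases haT : a ≤ (c i).T
        · rw [show n = i.val from rfl, G_apply_le γ0 c i hi haT,
            G_apply_gt γ0 c i hi (hhit i hi) hbT.le] at heq
          rcases lt_or_eq_of_le haT with haT' | rfl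
          · exfalso
            have hτ := (hitTime_spec γ0 c i (hhit i hi)).1
            have hmem : (G γ0 c (parentIx γ0 c i).val).toFun
                (hitTime γ0 c i + (b - (c i).T)) ∈
                ⋃ (k : Fin K) (_ : k < i), branchTrace γ0 c k :=
              G_trace_lt γ0 c hhit (parentIx_spec γ0 c i (hhit i hi)).1
                ⟨_, by simp only [Set.mem_Ici]; linarith, rfl⟩
            rw [← heq] at hmem
            exact hfirst i hi a ⟨ha, haT'⟩ hmem
          · rw [endpoint_eq γ0 c i hi (hhit i hi)] at heq
            have hτ := (hitTime_spec γ0 c i (hhit i hi)).1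
            have := ihp (Set.mem_Ici.mpr hτ)
              (Set.mem_Ici.mpr (by linarith : (0:ℝ) ≤ hitTime γ0 c i + (b - (c i).T))) heq
            linarith
        · push_neg at haT
          rw [show n = i.val from rfl, G_apply_gt γ0 c i hi (hhit i hi) haT.le,
            G_apply_gt γ0 c i hi (hhit i hi) hbT.le] at heq
          have hτ := (hitTime_spec γ0 c i (hhit i hi)).1
          have := ihp (Set.mem_Ici.mpr (by linarith : (0:ℝ) ≤ hitTime γ0 c i + (a - (c i).T)))
            (Set.mem_Ici.mpr (by linarith : (0:ℝ) ≤ hitTime γ0 c i + (b - (c i).T))) heq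
          linarith
    intro a ha b hb heq
    rcases le_total a b with h | h
    · exact key a b ha hb h heq
    · exact (key b a hb ha h heq.symm).symm

end Induct

section Merge

variable {K : ℕ} (γ0 : TransientCurve) (c : Fin K → FiniteCurve)

lemma G_merge
    (hhit : ∀ i : Fin K, 0 < i.val →
      (c i).toFun (c i).T ∈ ⋃ (j : Fin K) (_ : j < i), branchTrace γ0 c j)
    (hfirst : ∀ i : Fin K, 0 < i.val → ∀ t ∈ Set.Ico (0 : ℝ) (c i).T,
      (c i).toFun t ∉ ⋃ (j : Fin K) (_ : j < i), branchTrace γ0 c j)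
    (n : ℕ) :
    ∀ i j : Fin K, i.val ≤ n → j.val ≤ n →
      ∃ s t : ℝ, 0 ≤ s ∧ 0 ≤ t ∧
        (∀ u : ℝ, 0 ≤ u → (G γ0 c i.val).toFun (s + u) = (G γ0 c j.val).toFun (t + u)) ∧
        Disjoint ((G γ0 c i.val).toFun '' Set.Ico 0 s)
          ((G γ0 c j.val).toFun '' Set.Ico 0 t) := by
  induction n using Nat.strong_induction_on with
  | _ n ih =>
  -- main claim for j < i
  have main : ∀ i j : Fin K, j < i → i.val ≤ n →
      ∃ s t : ℝ, 0 ≤ s ∧ 0 ≤ t ∧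
        (∀ u : ℝ, 0 ≤ u → (G γ0 c i.val).toFun (s + u) = (G γ0 c j.val).toFun (t + u)) ∧
        Disjoint ((G γ0 c i.val).toFun '' Set.Ico 0 s)
          ((G γ0 c j.val).toFun '' Set.Ico 0 t) := by
    intro i j hji hin
    have hi : 0 < i.val := Nat.lt_of_le_of_lt (Nat.zero_le _) hji
    set p := parentIx γ0 c i with hpdef
    set τ := hitTime γ0 c i with hτdef
    set T := (c i).T with hTdef
    have hplt : p.val < i.val := parentIx_val_lt γ0 c i hi
    have hjlt : j.val < i.val := hji
    have hτ0 : 0 ≤ τ := (hitTime_spec γ0 c i (hhit i hi)).1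
    -- get merging data for the pair (p, j)
    obtain ⟨s, t, hs, ht, htail, hdisj⟩ :
        ∃ s t : ℝ, 0 ≤ s ∧ 0 ≤ t ∧
          (∀ u : ℝ, 0 ≤ u →
            (G γ0 c p.val).toFun (s + u) = (G γ0 c j.val).toFun (t + u)) ∧
          Disjoint ((G γ0 c p.val).toFun '' Set.Ico 0 s)
            ((G γ0 c j.val).toFun '' Set.Ico 0 t) := by
      by_cases hpj : p = j
      · exact ⟨0, 0, le_rfl, le_rfl, fun u hu => by rw [hpj], by simp⟩
      · have hn1 : 0 < i.val := hi
        refine ih (i.val - 1) (by omega) p j (by omega) (by omega)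
    -- c i on [0, T) avoids the trace of G j
    have havoid : ∀ a : ℝ, 0 ≤ a → a < T →
        ∀ b : ℝ, 0 ≤ b → (c i).toFun a ≠ (G γ0 c j.val).toFun b := by
      intro a ha haT b hb heq
      have : (G γ0 c j.val).toFun b ∈ ⋃ (k : Fin K) (_ : k < i), branchTrace γ0 c k :=
        G_trace_lt γ0 c hhit hji ⟨b, hb, rfl⟩
      rw [← heq] at this
      exact hfirst i hi a ⟨ha, haT⟩ this
    by_cases hτs : s ≤ τ
    · -- merging times (T, t + (τ - s))
      refine ⟨T, t + (τ - s), (c i).hT, by linarith, ?_, ?_⟩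
      · intro u hu
        rw [G_tail γ0 c i hi (hhit i hi) u hu]
        have := htail (τ - s + u) (by linarith)
        rw [show s + (τ - s + u) = τ + u by ring] at this
        rw [show t + (τ - s) + u = t + (τ - s + u) by ring]
        exact this
      · rw [Set.disjoint_left]
        rintro y ⟨a, ⟨ha0, haT⟩, rfl⟩ ⟨b, ⟨hb0, hbt⟩, hbeq⟩
        rw [show i.val = i.val from rfl, G_apply_le γ0 c i hi haT.le] at hbeq
        exact havoid a ha0 haT b hb0 hbeq.symm
    · push_neg at hτs
      -- merging times (T + (s - τ), t)
      refine ⟨T + (s - τ), t, by have := (c i).hT; linarith, ht, ?_, ?_⟩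
      · intro u hu
        rw [show T + (s - τ) + u = T + (s - τ + u) by ring,
          G_tail γ0 c i hi (hhit i hi) (s - τ + u) (by linarith),
          show τ + (s - τ + u) = s + u by ring]
        exact htail u hu
      · rw [Set.disjoint_left]
        rintro y ⟨a, ⟨ha0, haT⟩, rfl⟩ ⟨b, ⟨hb0, hbt⟩, hbeq⟩
        by_cases haT' : a < T
        · rw [G_apply_le γ0 c i hi haT'.le] at hbeq
          exact havoid a ha0 haT' b hb0 hbeq.symm
        · push_neg at haT'
          rw [G_apply_gt γ0 c i hi (hhit i hi) haT'] at hbeq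
          have hmem : (G γ0 c p.val).toFun (τ + (a - T)) ∈
              (G γ0 c p.val).toFun '' Set.Ico 0 s :=
            ⟨τ + (a - T), ⟨by linarith, by linarith⟩, rfl⟩
          have hmem2 : (G γ0 c p.val).toFun (τ + (a - T)) ∈
              (G γ0 c j.val).toFun '' Set.Ico 0 t :=
            ⟨b, ⟨hb0, hbt⟩, hbeq⟩
          exact Set.disjoint_left.mp hdisj hmem hmem2
  intro i j hin hjn
  rcases lt_trichotomy j i with h | rfl | h
  · exact main i j h hin
  · exact ⟨0, 0, le_rfl, le_rfl, fun u hu => rfl, by simp⟩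
  · obtain ⟨s, t, hs, ht, htail, hdisj⟩ := main j i h hjn
    exact ⟨t, s, ht, hs, fun u hu => (htail u hu).symm, hdisj.symm⟩

end Merge

/-- Given a simple transient curve starting at `x(1)` and, for `i = 2, …, K`,
simple finite curves starting at `x(i)` which first hit the union of the traces of the
previous branches exactly at their endpoint, there is a collection of transient curves
(extending the given branches and the first curve) which together with the points `x(i)`
forms a parameterized tree: all curves are simple, start at the `x(i)`, and every pair of
indices admits merging times with agreeing tails and disjoint initial traces. -/
theorem paramTree_from_essential_branches (K : ℕ) (hK : 0 < K)
    (x : Fin K → EuclideanSpace ℝ (Fin 3))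
    (γ0 : TransientCurve) (hγ0start : γ0.toFun 0 = x ⟨0, hK⟩)
    (hγ0inj : Set.InjOn γ0.toFun (Set.Ici 0))
    (c : Fin K → FiniteCurve)
    (hcstart : ∀ i : Fin K, 0 < i.val → (c i).toFun 0 = x i)
    (hcinj : ∀ i : Fin K, 0 < i.val → Set.InjOn (c i).toFun (Set.Icc 0 (c i).T))
    (hhit : ∀ i : Fin K, 0 < i.val →
      (c i).toFun (c i).T ∈ ⋃ (j : Fin K) (_ : j < i), branchTrace γ0 c j)
    (hfirst : ∀ i : Fin K, 0 < i.val → ∀ t ∈ Set.Ico (0 : ℝ) (c i).T,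
      (c i).toFun t ∉ ⋃ (j : Fin K) (_ : j < i), branchTrace γ0 c j) :
    ∃ g : Fin K → TransientCurve,
      (∀ i, (g i).toFun 0 = x i) ∧
      (∀ t ∈ Set.Ici (0 : ℝ), (g ⟨0, hK⟩).toFun t = γ0.toFun t) ∧
      (∀ i : Fin K, 0 < i.val → ∀ t ∈ Set.Icc (0 : ℝ) (c i).T,
        (g i).toFun t = (c i).toFun t) ∧
      (∀ i, Set.InjOn (g i).toFun (Set.Ici 0)) ∧
      (∀ i j : Fin K, ∃ s t : ℝ, 0 ≤ s ∧ 0 ≤ t ∧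
        (∀ u : ℝ, 0 ≤ u → (g i).toFun (s + u) = (g j).toFun (t + u)) ∧
        (i ≠ j → Disjoint ((g i).toFun '' Set.Ico 0 s) ((g j).toFun '' Set.Ico 0 t))) := by
  refine ⟨fun i => G γ0 c i.val, ?_, ?_, ?_, ?_, ?_⟩
  · intro i
    show (G γ0 c i.val).toFun 0 = x i
    rcases Nat.eq_zero_or_pos i.val with h0 | hpos
    · rw [h0, G_zero, hγ0start]
      exact congrArg x (Fin.ext (a := ⟨0, hK⟩) h0.symm)
    · rw [G_apply_le γ0 c i hpos (c i).hT]
      exact hcstart i hpos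
  · intro t ht
    show (G γ0 c 0).toFun t = γ0.toFun t
    rw [G_zero]
  · intro i hi t ht
    show (G γ0 c i.val).toFun t = (c i).toFun t
    exact G_apply_le γ0 c i hi ht.2
  · intro i
    exact G_inj γ0 c hγ0inj hcinj hhit hfirst i.val i.isLt
  · intro i j
    obtain ⟨s, t, hs, ht, htail, hdisj⟩ :=
      G_merge γ0 c hhit hfirst K i j i.isLt.le j.isLt.le
    exact ⟨s, t, hs, ht, htail, fun _ => hdisj⟩
end
end

section
/- Suppose parameterized trees 𝒯ₙ = (Xₙ, Γₙ) converge to 𝒯 = (X, Γ) in the space 𝔉^K with metric d(𝒯,𝒯̃) = max_i χ(γ^{x(i)}, γ̃^{x̃(i)}) + max_{i,j} |s^{i,j} − s̃^{i,j}|. Then the matrix of intrinsic distances between spanning points converges: (d_{𝒯ₙ}(xₙ(i), xₙ(j)))_{1≤i,j≤K} → (d_𝒯(x(i), x(j)))_{1≤i,j≤K}, where d_𝒯(z,w) is the duration of the unique path between z and w in the trace of 𝒯. -/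
open Filter Set

noncomputable section

/-- The intrinsic distance between the spanning points `x i` and `x j` of a parameterized
tree: the duration of the unique path between them in the trace, i.e. the infimum of
`s + t` over pairs of times after which the two curves agree. -/
noncomputable def ParamTree.spanDist {K : ℕ} (𝒯 : ParamTree K) (i j : Fin K) : ℝ :=
  sInf {r : ℝ | ∃ s t : ℝ, 0 ≤ s ∧ 0 ≤ t ∧ r = s + t ∧
    ∀ u : ℝ, 0 ≤ u → (𝒯.γ i).toFun (s + u) = (𝒯.γ j).toFun (t + u)}

/-- The metric on the space `𝔉^K` of parameterized trees:
`d(𝒯,𝒯̃) = max_i χ(γ^{x(i)}, γ̃^{x̃(i)}) + max_{i,j} |s^{i,j} − s̃^{i,j}|`. -/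
noncomputable def treeSpaceDist {K : ℕ} (𝒯 𝒯' : ParamTree K) : ℝ :=
  (⨆ i : Fin K, chiDist (𝒯.γ i) (𝒯'.γ i)) +
    ⨆ p : Fin K × Fin K, |𝒯.s p.1 p.2 - 𝒯'.s p.1 p.2|

lemma chiDist_nonneg (γ₁ γ₂ : TransientCurve) : 0 ≤ chiDist γ₁ γ₂ := by
  refine tsum_nonneg fun k => mul_nonneg (by positivity) ?_
  exact le_min zero_le_one (Real.iSup_nonneg fun _ => dist_nonneg)

lemma spanDist_lb {K : ℕ} (𝒯 : ParamTree K) {i j : Fin K} (hij : i ≠ j) :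
    ∀ r ∈ {r : ℝ | ∃ s t : ℝ, 0 ≤ s ∧ 0 ≤ t ∧ r = s + t ∧
      ∀ u : ℝ, 0 ≤ u → (𝒯.γ i).toFun (s + u) = (𝒯.γ j).toFun (t + u)},
      𝒯.s i j + 𝒯.s j i ≤ r := by
  rintro r ⟨s, t, hs, ht, rfl, hagree⟩
  by_cases hcase : 𝒯.s i j ≤ s
  · -- injectivity gives t = s j i + (s - s i j)
    have h1 : (𝒯.γ j).toFun t = (𝒯.γ j).toFun (𝒯.s j i + (s - 𝒯.s i j)) := by
      have h2 := hagree 0 le_rfl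
      have h3 := 𝒯.merge i j (s - 𝒯.s i j) (by linarith)
      rw [add_zero, add_zero] at h2
      rw [add_sub_cancel] at h3
      rw [← h2, h3]
    have hsn := 𝒯.s_nonneg j i
    have := 𝒯.simple j (by exact ht)
      (by simp only [Set.mem_Ici]; linarith) h1
    linarith
  · exfalso
    push_neg at hcase
    -- injectivity gives t + (s i j - s) = s j i
    have h1 : (𝒯.γ j).toFun (t + (𝒯.s i j - s)) = (𝒯.γ j).toFun (𝒯.s j i) := by
      have h2 := hagree (𝒯.s i j - s) (by linarith)
      have h3 := 𝒯.merge i j 0 le_rfl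
      rw [add_sub_cancel] at h2
      rw [add_zero, add_zero] at h3
      rw [← h2, h3]
    have ht' : t + (𝒯.s i j - s) = 𝒯.s j i :=
      𝒯.simple j (by simp only [Set.mem_Ici]; linarith)
        (by simp only [Set.mem_Ici]; exact 𝒯.s_nonneg j i) h1
    have htlt : t < 𝒯.s j i := by linarith
    have h2 := hagree 0 le_rfl
    rw [add_zero, add_zero] at h2
    exact Set.disjoint_left.mp (𝒯.disj i j hij)
      ⟨s, ⟨hs, hcase⟩, rfl⟩ ⟨t, ⟨ht, htlt⟩, h2.symm⟩

lemma spanDist_eq {K : ℕ} (𝒯 : ParamTree K) {i j : Fin K} (hij : i ≠ j) :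
    𝒯.spanDist i j = 𝒯.s i j + 𝒯.s j i := by
  have hmem : 𝒯.s i j + 𝒯.s j i ∈ {r : ℝ | ∃ s t : ℝ, 0 ≤ s ∧ 0 ≤ t ∧ r = s + t ∧
      ∀ u : ℝ, 0 ≤ u → (𝒯.γ i).toFun (s + u) = (𝒯.γ j).toFun (t + u)} :=
    ⟨𝒯.s i j, 𝒯.s j i, 𝒯.s_nonneg i j, 𝒯.s_nonneg j i, rfl, 𝒯.merge i j⟩
  exact le_antisymm (csInf_le ⟨_, spanDist_lb 𝒯 hij⟩ hmem)
    (le_csInf ⟨_, hmem⟩ (spanDist_lb 𝒯 hij))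

lemma spanDist_self {K : ℕ} (𝒯 : ParamTree K) (i : Fin K) : 𝒯.spanDist i i = 0 := by
  have hmem : (0 : ℝ) ∈ {r : ℝ | ∃ s t : ℝ, 0 ≤ s ∧ 0 ≤ t ∧ r = s + t ∧
      ∀ u : ℝ, 0 ≤ u → (𝒯.γ i).toFun (s + u) = (𝒯.γ i).toFun (t + u)} :=
    ⟨0, 0, le_rfl, le_rfl, by ring, fun u _ => rfl⟩
  have hlb : ∀ r ∈ {r : ℝ | ∃ s t : ℝ, 0 ≤ s ∧ 0 ≤ t ∧ r = s + t ∧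
      ∀ u : ℝ, 0 ≤ u → (𝒯.γ i).toFun (s + u) = (𝒯.γ i).toFun (t + u)}, (0 : ℝ) ≤ r := by
    rintro r ⟨s, t, hs, ht, rfl, -⟩; linarith
  exact le_antisymm (csInf_le ⟨0, hlb⟩ hmem) (le_csInf ⟨0, hmem⟩ hlb)

/-- If parameterized trees `𝒯ₙ` converge to `𝒯` in `𝔉^K`, then the matrix of
intrinsic distances between the spanning points converges. -/
theorem treeSpace_tendsto_spanDist (K : ℕ) (𝒯n : ℕ → ParamTree K) (𝒯 : ParamTree K)
    (h : Tendsto (fun n => treeSpaceDist (𝒯n n) 𝒯) atTop (nhds 0)) :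
    ∀ i j : Fin K,
      Tendsto (fun n => (𝒯n n).spanDist i j) atTop (nhds (𝒯.spanDist i j)) := by
  intro i j
  by_cases hij : i = j
  · subst hij
    simp only [spanDist_self]
    exact tendsto_const_nhds
  · have hb : ∀ a b : Fin K,
        Tendsto (fun n => (𝒯n n).s a b) atTop (nhds (𝒯.s a b)) := by
      intro a b
      rw [tendsto_iff_dist_tendsto_zero]
      refine squeeze_zero (fun n => dist_nonneg)
        (fun n => ?_) h
      rw [Real.dist_eq]
      have h1 : |(𝒯n n).s a b - 𝒯.s a b| ≤
          ⨆ p : Fin K × Fin K, |(𝒯n n).s p.1 p.2 - 𝒯.s p.1 p.2| :=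
        le_ciSup (f := fun p : Fin K × Fin K => |(𝒯n n).s p.1 p.2 - 𝒯.s p.1 p.2|)
          (Set.Finite.bddAbove (Set.finite_range _)) (a, b)
      have h2 : (0 : ℝ) ≤ ⨆ i : Fin K, chiDist ((𝒯n n).γ i) (𝒯.γ i) :=
        Real.iSup_nonneg fun i => chiDist_nonneg _ _
      unfold treeSpaceDist
      linarith
    simp only [spanDist_eq _ hij]
    exact (hb i j).add (hb j i)
end
end
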